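/- Let λ : ℤ → ℝ be strictly increasing with λ_n → ±∞ as n → ±∞ and let f : ℤ → ℂ. Then the two piecewise cubic formulas defining Φ₂f agree at the common endpoints of their intervals (so Φ₂f : ℝ → ℂ is well defined), Φ₂f is continuously differentiable on ℝ, and for every n ∈ ℤ: (Φ₂f)(λ_n) = f_n, (Φ₂f)'(λ_n) = α_n(f), (Φ₂f)(μ_n) = (f_n + f_{n+1})/2, and (Φ₂f)'(μ_n) = f[λ_n,λ_{n+1}]. -/

import Mathlib

open MeasureTheory
open scoped ENNReal NNReal

/-- `lam` is a strictly increasing sequence tending to `-∞` at `-∞` and `+∞` at `+∞`. -/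
def GoodSeq (lam : ℤ → ℝ) : Prop :=
  StrictMono lam ∧ Filter.Tendsto lam Filter.atBot Filter.atBot ∧
    Filter.Tendsto lam Filter.atTop Filter.atTop

/-- `F` is an admissible `r`-extension of `f : ℤ → ℂ`, with associated `r`-th derivative `G`:
`F` is `(r-1)` times continuously differentiable, `G` is locally integrable,
`F^{(r-1)}(b) - F^{(r-1)}(a) = ∫_a^b G` for all `a ≤ b`, and `F (lam n) = f n` for all `n`. -/
def AdmissibleExt (r : ℕ) (lam : ℤ → ℝ) (f : ℤ → ℂ) (F G : ℝ → ℂ) : Prop :=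
  ContDiff ℝ (r - 1 : ℕ) F ∧ MeasureTheory.LocallyIntegrable G volume ∧
  (∀ a b : ℝ, a ≤ b →
      iteratedDeriv (r - 1) F b - iteratedDeriv (r - 1) F a = ∫ t in a..b, G t) ∧
  (∀ n : ℤ, F (lam n) = f n)

/-- Homogeneous trace seminorm `‖f‖_{L^r_p|Λ}`, valued in `[0,∞]`. -/
noncomputable def traceL (r : ℕ) (p : ℝ) (lam : ℤ → ℝ) (f : ℤ → ℂ) : ℝ≥0∞ :=
  ⨅ (F : ℝ → ℂ) (G : ℝ → ℂ) (_ : AdmissibleExt r lam f F G),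
    (∫⁻ t, ENNReal.ofReal (‖G t‖ ^ p)) ^ (1 / p)

/-- Trace norm `‖f‖_{W^r_p|Λ}`, valued in `[0,∞]`. -/
noncomputable def traceW (r : ℕ) (p : ℝ) (lam : ℤ → ℝ) (f : ℤ → ℂ) : ℝ≥0∞ :=
  ⨅ (F : ℝ → ℂ) (G : ℝ → ℂ) (_ : AdmissibleExt r lam f F G),
    ((∫⁻ t, ENNReal.ofReal (‖F t‖ ^ p)) +
      (∫⁻ t, ENNReal.ofReal (‖G t‖ ^ p))) ^ (1 / p)

/-- First order divided difference `f[λ_n, λ_{n+1}]`. -/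
noncomputable def dd1 (lam : ℤ → ℝ) (f : ℤ → ℂ) (n : ℤ) : ℂ :=
  (f (n + 1) - f n) / ((lam (n + 1) - lam n : ℝ) : ℂ)

/-- Second order divided difference `f[λ_n, λ_{n+1}, λ_{n+2}]`. -/
noncomputable def dd2 (lam : ℤ → ℝ) (f : ℤ → ℂ) (n : ℤ) : ℂ :=
  (dd1 lam f (n + 1) - dd1 lam f n) / ((lam (n + 2) - lam n : ℝ) : ℂ)

/-- Divided difference `f[λ_n, …, λ_{n+k}]` of order `k`. -/
noncomputable def ddiv (lam : ℤ → ℝ) (f : ℤ → ℂ) (n : ℤ) (k : ℕ) : ℂ :=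
  ∑ i ∈ Finset.range (k + 1),
    f (n + (i : ℤ)) /
      ∏ j ∈ (Finset.range (k + 1)).erase i,
        ((lam (n + (i : ℤ)) - lam (n + (j : ℤ)) : ℝ) : ℂ)

/-- Divided difference of values `v` at (distinct) points `x`. -/
noncomputable def ddPts {m : ℕ} (x : Fin m → ℝ) (v : Fin m → ℂ) : ℂ :=
  ∑ i, v i / ∏ j ∈ Finset.univ.erase i, ((x i - x j : ℝ) : ℂ)

/-- `F` is of class `W^r` on `[a,b]` with `r`-th derivative `G`. -/
def ClassW (r : ℕ) (a b : ℝ) (F G : ℝ → ℂ) : Prop :=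
  ContDiffOn ℝ (r - 1 : ℕ) F (Set.Icc a b) ∧ MeasureTheory.IntegrableOn G (Set.Icc a b) ∧
  ∀ x y : ℝ, a ≤ x → x ≤ y → y ≤ b →
    iteratedDerivWithin (r - 1) F (Set.Icc a b) y -
      iteratedDerivWithin (r - 1) F (Set.Icc a b) x = ∫ t in x..y, G t

/-- `‖f‖_{eq,L}^p`, valued in `[0,∞]`. -/
noncomputable def eqLp (r : ℕ) (p : ℝ) (lam : ℤ → ℝ) (f : ℤ → ℂ) : ℝ≥0∞ :=
  ∑' n : ℤ, ENNReal.ofReal ((lam (n + (r : ℤ)) - lam n) * ‖ddiv lam f n r‖ ^ p)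

/-- `‖f‖_{eq,W}^p`, valued in `[0,∞]`. -/
noncomputable def eqWp (r : ℕ) (p : ℝ) (lam : ℤ → ℝ) (f : ℤ → ℂ) : ℝ≥0∞ :=
  eqLp r p lam f +
    ∑ j ∈ Finset.range r, ∑' n : ℤ,
      ENNReal.ofReal ((lam (n + (r : ℤ)) - lam n) ^ ((j : ℝ) * p + 1) *
        ‖ddiv lam f n j‖ ^ p)

/-- The cubic `q(x) = 4(x² - x³)`. -/
noncomputable def qcub : ℝ → ℝ := fun x => 4 * (x ^ 2 - x ^ 3)

/-- `α_n(f) = (h_n f[λ_{n-1},λ_n] + h_{n-1} f[λ_n,λ_{n+1}])/(h_{n-1}+h_n)`. -/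
noncomputable def alphaN (lam : ℤ → ℝ) (f : ℤ → ℂ) (n : ℤ) : ℂ :=
  (((lam (n + 1) - lam n : ℝ) : ℂ) * dd1 lam f (n - 1) +
      ((lam n - lam (n - 1) : ℝ) : ℂ) * dd1 lam f n) /
    ((lam (n + 1) - lam (n - 1) : ℝ) : ℂ)

/-- The formula for `Φ₁ f` on `[λ_n, λ_{n+1}]`. -/
noncomputable def phi1P (lam : ℤ → ℝ) (f : ℤ → ℂ) (n : ℤ) (x : ℝ) : ℂ :=
  f n * (((lam (n + 1) - x) / (lam (n + 1) - lam n) : ℝ) : ℂ) +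
    f (n + 1) * (((x - lam n) / (lam (n + 1) - lam n) : ℝ) : ℂ)

/-- The formula for `Φ₂ f` on `[μ_{n-1}, λ_n]`. -/
noncomputable def phi2L (lam : ℤ → ℝ) (f : ℤ → ℂ) (n : ℤ) (x : ℝ) : ℂ :=
  f n + alphaN lam f n * ((x - lam n : ℝ) : ℂ) +
    (((lam n - lam (n - 1)) ^ 2 : ℝ) : ℂ) * dd2 lam f (n - 1) *
      ((qcub ((lam n - x) / (lam n - lam (n - 1))) : ℝ) : ℂ)

/-- The formula for `Φ₂ f` on `[λ_n, μ_n]`. -/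
noncomputable def phi2R (lam : ℤ → ℝ) (f : ℤ → ℂ) (n : ℤ) (x : ℝ) : ℂ :=
  f n + alphaN lam f n * ((x - lam n : ℝ) : ℂ) +
    (((lam (n + 1) - lam n) ^ 2 : ℝ) : ℂ) * dd2 lam f (n - 1) *
      ((qcub ((x - lam n) / (lam (n + 1) - lam n)) : ℝ) : ℂ)

/-!
Both formulas are instances of the cubic `v + α (x - c) + h² D q((x - c) / h)`. Since
`q 0 = q' 0 = 0`, `q (1/2) = 1/2` and `q' (1/2) = 1`, at `λ_n` both formulas have value `f_n` and
slope `α_n`, and at `μ_n` both have value `(f_n + f_{n+1}) / 2` and slope `f[λ_n, λ_{n+1}]`, by the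
divided-difference identities
`α_n + h_n f[λ_{n-1}, λ_n, λ_{n+1}] = f[λ_n, λ_{n+1}] = α_{n+1} - h_n f[λ_n, λ_{n+1}, λ_{n+2}]`.
So `Φ₂ f` is glued from polynomials along the knots `… < λ_n < μ_n < λ_{n+1} < …`, with matching
derivatives at every knot, and is therefore `C¹`.
-/

open Set Filter Topology

section Gluing

variable {E : Type*} {F φ ψ : ℝ → E} {a b x : ℝ}

theorem hasDerivAt_of_eqOn_Icc_left_right [NormedAddCommGroup E] [NormedSpace ℝ E] {d : E}
    (hax : a < x) (hxb : x < b)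
    (hφ : EqOn F φ (Icc a x)) (hψ : EqOn F ψ (Icc x b))
    (hφd : HasDerivAt φ d x) (hψd : HasDerivAt ψ d x) : HasDerivAt F d x := by
  have hl : HasDerivWithinAt F d (Iic x) x :=
    hφd.hasDerivWithinAt.congr_of_eventuallyEq (eventuallyEq_of_mem (Icc_mem_nhdsLE hax) hφ)
      (hφ ⟨hax.le, le_rfl⟩)
  have hr : HasDerivWithinAt F d (Ici x) x :=
    hψd.hasDerivWithinAt.congr_of_eventuallyEq (eventuallyEq_of_mem (Icc_mem_nhdsGE hxb) hψ)
      (hψ ⟨le_rfl, hxb.le⟩)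
  simpa only [Iic_union_Ici, hasDerivWithinAt_univ] using hl.union hr

theorem continuousAt_of_eqOn_Icc_left_right [TopologicalSpace E] (hax : a < x) (hxb : x < b)
    (hφ : EqOn F φ (Icc a x)) (hψ : EqOn F ψ (Icc x b))
    (hφc : ContinuousAt φ x) (hψc : ContinuousAt ψ x) : ContinuousAt F x :=
  continuousAt_iff_continuous_left_right.2
    ⟨hφc.continuousWithinAt.congr_of_eventuallyEq
        (eventuallyEq_of_mem (Icc_mem_nhdsLE hax) hφ) (hφ ⟨hax.le, le_rfl⟩),
      hψc.continuousWithinAt.congr_of_eventuallyEq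
        (eventuallyEq_of_mem (Icc_mem_nhdsGE hxb) hψ) (hψ ⟨le_rfl, hxb.le⟩)⟩

variable {t : ℤ → ℝ} {P P' : ℤ → ℝ → E}

theorem exists_left_right_pieces (ht : StrictMono t)
    (hcover : ∀ x, ∃ k, x ∈ Ico (t k) (t (k + 1)))
    (hmatch : ∀ k, P' k (t (k + 1)) = P' (k + 1) (t (k + 1))) (x : ℝ) :
    ∃ j k, x ∈ Ioc (t j) (t (j + 1)) ∧ x ∈ Ico (t k) (t (k + 1)) ∧ P' j x = P' k x := by
  obtain ⟨k, hk⟩ := hcover x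
  rcases hk.1.eq_or_lt with hx | hx
  · subst hx
    refine ⟨k - 1, k, ⟨ht (sub_one_lt k), by rw [sub_add_cancel]⟩, hk, ?_⟩
    simpa only [sub_add_cancel] using hmatch (k - 1)
  · exact ⟨k, k, ⟨hx, hk.2.le⟩, hk, rfl⟩

theorem contDiff_one_of_eqOn_Icc_pieces [NormedAddCommGroup E] [NormedSpace ℝ E]
    (ht : StrictMono t)
    (hcover : ∀ x, ∃ k, x ∈ Ico (t k) (t (k + 1)))
    (hP : ∀ k x, HasDerivAt (P k) (P' k x) x) (hP' : ∀ k, Continuous (P' k))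
    (hmatch : ∀ k, P' k (t (k + 1)) = P' (k + 1) (t (k + 1)))
    (hF : ∀ k, EqOn F (P k) (Icc (t k) (t (k + 1)))) :
    ContDiff ℝ 1 F ∧ ∀ k, EqOn (deriv F) (P' k) (Icc (t k) (t (k + 1))) := by
  have hdiff : Differentiable ℝ F := fun x => by
    obtain ⟨j, k, hj, hk, hjk⟩ := exists_left_right_pieces ht hcover hmatch x
    refine (hasDerivAt_of_eqOn_Icc_left_right hj.1 hk.2
      ((hF j).mono (Icc_subset_Icc_right hj.2)) ((hF k).mono (Icc_subset_Icc_left hk.1))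
      (hjk ▸ hP j x) (hP k x)).differentiableAt
  have hderiv : ∀ k, EqOn (deriv F) (P' k) (Icc (t k) (t (k + 1))) := fun k x hx =>
    (uniqueDiffOn_Icc (ht (lt_add_one k)) x hx).eq_deriv _
      (hdiff x).hasDerivAt.hasDerivWithinAt ((hP k x).hasDerivWithinAt.congr_of_mem (hF k) hx)
  refine ⟨contDiff_one_iff_deriv.2 ⟨hdiff, continuous_iff_continuousAt.2 fun x => ?_⟩, hderiv⟩
  obtain ⟨j, k, hj, hk, -⟩ := exists_left_right_pieces ht hcover hmatch x
  exact continuousAt_of_eqOn_Icc_left_right hj.1 hk.2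
    ((hderiv j).mono (Icc_subset_Icc_right hj.2)) ((hderiv k).mono (Icc_subset_Icc_left hk.1))
    (hP' j).continuousAt (hP' k).continuousAt

end Gluing

theorem exists_mem_Ico_of_tendsto {lam : ℤ → ℝ} (hmono : Monotone lam)
    (hbot : Tendsto lam atBot atBot) (htop : Tendsto lam atTop atTop) (x : ℝ) :
    ∃ n, x ∈ Ico (lam n) (lam (n + 1)) := by
  obtain ⟨a, ha⟩ := (hbot.eventually (eventually_le_atBot x)).exists
  obtain ⟨b, hb⟩ := (htop.eventually (eventually_gt_atTop x)).exists
  obtain ⟨n, hn, hmax⟩ := Int.exists_greatest_of_bdd (P := fun n => lam n ≤ x)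
    ⟨b, fun n hn => le_of_not_gt fun hbn => (hb.trans_le (hmono hbn.le)).not_ge hn⟩ ⟨a, ha⟩
  exact ⟨n, hn, lt_of_not_ge fun h => (lt_add_one n).not_ge (hmax _ h)⟩

noncomputable def qcub' (x : ℝ) : ℝ := 8 * x - 12 * x ^ 2

theorem hasDerivAt_qcub (x : ℝ) : HasDerivAt qcub (qcub' x) x := by
  have h := ((hasDerivAt_pow 2 x).sub (hasDerivAt_pow 3 x)).const_mul (4 : ℝ)
  exact h.congr_deriv (by simp only [qcub']; ring)

/-- `v + α (x - c) + h² D q((x - c) / h)`: on `[λ_n, μ_n]` resp. `[μ_{n-1}, λ_n]`, `Φ₂ f` is this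
cubic with `c = λ_n` and `h = h_n` resp. `h = -h_{n-1}`. -/
noncomputable def cubicPiece (v α D : ℂ) (c h x : ℝ) : ℂ :=
  v + α * ((x - c : ℝ) : ℂ) + ((h ^ 2 : ℝ) : ℂ) * D * ((qcub ((x - c) / h) : ℝ) : ℂ)

noncomputable def cubicPieceDeriv (α D : ℂ) (c h x : ℝ) : ℂ :=
  α + (h : ℂ) * D * ((qcub' ((x - c) / h) : ℝ) : ℂ)

section CubicPiece

variable (v α D : ℂ) (c : ℝ) {h : ℝ}

theorem hasDerivAt_cubicPiece (hh : h ≠ 0) (x : ℝ) :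
    HasDerivAt (cubicPiece v α D c h) (cubicPieceDeriv α D c h x) x := by
  have harg : HasDerivAt (fun y => (y - c) / h) (1 / h) x := by
    simpa using ((hasDerivAt_id x).sub_const c).div_const h
  have hq := ((hasDerivAt_qcub _).comp x harg).ofReal_comp
  have hlin : HasDerivAt (fun y : ℝ => ((y - c : ℝ) : ℂ)) 1 x := by
    simpa using ((hasDerivAt_id x).sub_const c).ofReal_comp
  refine (((hlin.const_mul α).const_add v).add
    (hq.const_mul (((h ^ 2 : ℝ) : ℂ) * D))).congr_deriv ?_
  have hC : (h : ℂ) ≠ 0 := Complex.ofReal_ne_zero.2 hh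
  simp only [cubicPieceDeriv]
  push_cast
  field_simp

theorem continuous_cubicPieceDeriv (h : ℝ) : Continuous (cubicPieceDeriv α D c h) := by
  unfold cubicPieceDeriv qcub'
  fun_prop

theorem cubicPiece_self (h : ℝ) : cubicPiece v α D c h c = v := by
  simp [cubicPiece, qcub]

theorem cubicPieceDeriv_self (h : ℝ) : cubicPieceDeriv α D c h c = α := by
  simp [cubicPieceDeriv, qcub']

theorem cubicPiece_add_half (hh : h ≠ 0) :
    cubicPiece v α D c h (c + h / 2) = v + (α + h * D) * (h / 2 : ℝ) := by
  have harg : (c + h / 2 - c) / h = 1 / 2 := by field_simp; ring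
  rw [cubicPiece, harg, show qcub (1 / 2) = 1 / 2 by norm_num [qcub]]
  push_cast
  ring

theorem cubicPieceDeriv_add_half (hh : h ≠ 0) :
    cubicPieceDeriv α D c h (c + h / 2) = α + h * D := by
  have harg : (c + h / 2 - c) / h = 1 / 2 := by field_simp; ring
  rw [cubicPieceDeriv, harg, show qcub' (1 / 2) = 1 by norm_num [qcub']]
  push_cast
  ring

end CubicPiece

section Phi2

variable (lam : ℤ → ℝ) (f : ℤ → ℂ)

theorem phi2R_eq_cubicPiece (n : ℤ) :
    phi2R lam f n =
      cubicPiece (f n) (alphaN lam f n) (dd2 lam f (n - 1)) (lam n) (lam (n + 1) - lam n) :=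
  rfl

theorem phi2L_eq_cubicPiece (n : ℤ) :
    phi2L lam f n =
      cubicPiece (f n) (alphaN lam f n) (dd2 lam f (n - 1)) (lam n) (lam (n - 1) - lam n) := by
  funext x
  have harg : (lam n - x) / (lam n - lam (n - 1)) = (x - lam n) / (lam (n - 1) - lam n) := by
    rw [← neg_sub x, ← neg_sub (lam (n - 1)), neg_div_neg_eq]
  rw [phi2L, cubicPiece, harg, sub_sq_comm]

noncomputable def phi2RDeriv (n : ℤ) : ℝ → ℂ :=
  cubicPieceDeriv (alphaN lam f n) (dd2 lam f (n - 1)) (lam n) (lam (n + 1) - lam n)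

noncomputable def phi2LDeriv (n : ℤ) : ℝ → ℂ :=
  cubicPieceDeriv (alphaN lam f n) (dd2 lam f (n - 1)) (lam n) (lam (n - 1) - lam n)

variable {lam}

theorem dd1_mul_sub (hlam : StrictMono lam) (n : ℤ) :
    dd1 lam f n * ((lam (n + 1) - lam n : ℝ) : ℂ) = f (n + 1) - f n :=
  div_mul_cancel₀ _ (Complex.ofReal_ne_zero.2 (sub_ne_zero.2 (hlam (lt_add_one n)).ne'))

theorem alphaN_add_mul_dd2 (hlam : StrictMono lam) (n : ℤ) :
    alphaN lam f n + ((lam (n + 1) - lam n : ℝ) : ℂ) * dd2 lam f (n - 1) = dd1 lam f n := by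
  have h₁ : (lam n : ℂ) - lam (n - 1) ≠ 0 := by
    exact_mod_cast sub_ne_zero.2 (hlam (sub_one_lt n)).ne'
  have h₂ : (lam (n + 1) : ℂ) - lam n ≠ 0 := by
    exact_mod_cast sub_ne_zero.2 (hlam (lt_add_one n)).ne'
  have h₃ : (lam (n + 1) : ℂ) - lam (n - 1) ≠ 0 := by
    exact_mod_cast sub_ne_zero.2 (hlam (by omega : n - 1 < n + 1)).ne'
  simp only [alphaN, dd2, dd1, sub_add_cancel, show n - 1 + 2 = n + 1 by ring]
  push_cast
  field_simp
  ring

theorem alphaN_succ_add_mul_dd2 (hlam : StrictMono lam) (n : ℤ) :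
    alphaN lam f (n + 1) + ((lam n - lam (n + 1) : ℝ) : ℂ) * dd2 lam f n = dd1 lam f n := by
  have h₁ : (lam (n + 1) : ℂ) - lam n ≠ 0 := by
    exact_mod_cast sub_ne_zero.2 (hlam (lt_add_one n)).ne'
  have h₂ : (lam (n + 2) : ℂ) - lam (n + 1) ≠ 0 := by
    exact_mod_cast sub_ne_zero.2 (hlam (by omega : n + 1 < n + 2)).ne'
  have h₃ : (lam (n + 2) : ℂ) - lam n ≠ 0 := by
    exact_mod_cast sub_ne_zero.2 (hlam (by omega : n < n + 2)).ne'
  simp only [alphaN, dd2, dd1, add_sub_cancel_right, show n + 1 + 1 = n + 2 by ring]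
  push_cast
  field_simp
  ring

theorem phi2R_apply_self (n : ℤ) : phi2R lam f n (lam n) = f n :=
  cubicPiece_self ..

theorem phi2L_apply_self (n : ℤ) : phi2L lam f n (lam n) = f n := by
  rw [phi2L_eq_cubicPiece, cubicPiece_self]

theorem phi2RDeriv_apply_self (n : ℤ) : phi2RDeriv lam f n (lam n) = alphaN lam f n :=
  cubicPieceDeriv_self ..

theorem phi2LDeriv_apply_self (n : ℤ) : phi2LDeriv lam f n (lam n) = alphaN lam f n :=
  cubicPieceDeriv_self ..

theorem phi2R_apply_midpoint (hlam : StrictMono lam) (n : ℤ) :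
    phi2R lam f n ((lam n + lam (n + 1)) / 2) = (f n + f (n + 1)) / 2 := by
  have hh : lam (n + 1) - lam n ≠ 0 := sub_ne_zero.2 (hlam (lt_add_one n)).ne'
  rw [phi2R_eq_cubicPiece, show (lam n + lam (n + 1)) / 2 = lam n + (lam (n + 1) - lam n) / 2 by
    ring, cubicPiece_add_half _ _ _ _ hh, alphaN_add_mul_dd2 f hlam]
  linear_combination (norm := (push_cast; ring)) dd1_mul_sub f hlam n / 2

theorem phi2L_succ_apply_midpoint (hlam : StrictMono lam) (n : ℤ) :
    phi2L lam f (n + 1) ((lam n + lam (n + 1)) / 2) = (f n + f (n + 1)) / 2 := by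
  have hh : lam n - lam (n + 1) ≠ 0 := sub_ne_zero.2 (hlam (lt_add_one n)).ne
  rw [phi2L_eq_cubicPiece, add_sub_cancel_right, show (lam n + lam (n + 1)) / 2 =
    lam (n + 1) + (lam n - lam (n + 1)) / 2 by ring, cubicPiece_add_half _ _ _ _ hh,
    alphaN_succ_add_mul_dd2 f hlam]
  linear_combination (norm := (push_cast; ring)) -dd1_mul_sub f hlam n / 2

theorem phi2RDeriv_apply_midpoint (hlam : StrictMono lam) (n : ℤ) :
    phi2RDeriv lam f n ((lam n + lam (n + 1)) / 2) = dd1 lam f n := by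
  have hh : lam (n + 1) - lam n ≠ 0 := sub_ne_zero.2 (hlam (lt_add_one n)).ne'
  rw [phi2RDeriv, show (lam n + lam (n + 1)) / 2 = lam n + (lam (n + 1) - lam n) / 2 by
    ring, cubicPieceDeriv_add_half _ _ _ hh, alphaN_add_mul_dd2 f hlam]

theorem phi2LDeriv_succ_apply_midpoint (hlam : StrictMono lam) (n : ℤ) :
    phi2LDeriv lam f (n + 1) ((lam n + lam (n + 1)) / 2) = dd1 lam f n := by
  have hh : lam n - lam (n + 1) ≠ 0 := sub_ne_zero.2 (hlam (lt_add_one n)).ne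
  rw [phi2LDeriv, add_sub_cancel_right, show (lam n + lam (n + 1)) / 2 =
    lam (n + 1) + (lam n - lam (n + 1)) / 2 by ring, cubicPieceDeriv_add_half _ _ _ hh,
    alphaN_succ_add_mul_dd2 f hlam]

theorem hasDerivAt_phi2R (hlam : StrictMono lam) (n : ℤ) (x : ℝ) :
    HasDerivAt (phi2R lam f n) (phi2RDeriv lam f n x) x :=
  hasDerivAt_cubicPiece _ _ _ _ (sub_ne_zero.2 (hlam (lt_add_one n)).ne') x

theorem hasDerivAt_phi2L (hlam : StrictMono lam) (n : ℤ) (x : ℝ) :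
    HasDerivAt (phi2L lam f n) (phi2LDeriv lam f n x) x := by
  rw [phi2L_eq_cubicPiece]
  exact hasDerivAt_cubicPiece _ _ _ _ (sub_ne_zero.2 (hlam (sub_one_lt n)).ne) x

end Phi2

section Knots

variable (lam : ℤ → ℝ) (f : ℤ → ℂ)

/-- Knot `2n` is `λ_n` and knot `2n + 1` is `μ_n`; piece `k` of `Φ₂ f` lives between knots `k` and
`k + 1`. -/
noncomputable def phi2Knot (k : ℤ) : ℝ :=
  if Even k then lam (k / 2) else (lam (k / 2) + lam (k / 2 + 1)) / 2

noncomputable def phi2Piece (k : ℤ) : ℝ → ℂ :=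
  if Even k then phi2R lam f (k / 2) else phi2L lam f (k / 2 + 1)

noncomputable def phi2PieceDeriv (k : ℤ) : ℝ → ℂ :=
  if Even k then phi2RDeriv lam f (k / 2) else phi2LDeriv lam f (k / 2 + 1)

theorem two_mul_add_one_ediv_two (n : ℤ) : (2 * n + 1) / 2 = n := by
  omega

theorem two_mul_add_one_add_one (n : ℤ) : 2 * n + 1 + 1 = 2 * (n + 1) := by
  ring

theorem phi2Knot_two_mul (n : ℤ) : phi2Knot lam (2 * n) = lam n := by
  simp [phi2Knot]

theorem phi2Knot_two_mul_add_one (n : ℤ) :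
    phi2Knot lam (2 * n + 1) = (lam n + lam (n + 1)) / 2 := by
  simp [phi2Knot, two_mul_add_one_ediv_two]

theorem phi2Piece_two_mul (n : ℤ) : phi2Piece lam f (2 * n) = phi2R lam f n := by
  simp [phi2Piece]

theorem phi2Piece_two_mul_add_one (n : ℤ) :
    phi2Piece lam f (2 * n + 1) = phi2L lam f (n + 1) := by
  simp [phi2Piece, two_mul_add_one_ediv_two]

theorem phi2PieceDeriv_two_mul (n : ℤ) : phi2PieceDeriv lam f (2 * n) = phi2RDeriv lam f n := by
  simp [phi2PieceDeriv]

theorem phi2PieceDeriv_two_mul_add_one (n : ℤ) :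
    phi2PieceDeriv lam f (2 * n + 1) = phi2LDeriv lam f (n + 1) := by
  simp [phi2PieceDeriv, two_mul_add_one_ediv_two]

variable {lam}

theorem hasDerivAt_phi2Piece (hlam : StrictMono lam) (k : ℤ) (x : ℝ) :
    HasDerivAt (phi2Piece lam f k) (phi2PieceDeriv lam f k x) x := by
  obtain ⟨n, rfl | rfl⟩ := Int.even_or_odd' k
  · rw [phi2Piece_two_mul, phi2PieceDeriv_two_mul]
    exact hasDerivAt_phi2R f hlam n x
  · rw [phi2Piece_two_mul_add_one, phi2PieceDeriv_two_mul_add_one]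
    exact hasDerivAt_phi2L f hlam (n + 1) x

theorem continuous_phi2PieceDeriv (k : ℤ) : Continuous (phi2PieceDeriv lam f k) := by
  unfold phi2PieceDeriv phi2RDeriv phi2LDeriv
  split_ifs <;> exact continuous_cubicPieceDeriv ..

theorem phi2PieceDeriv_apply_knot_succ (hlam : StrictMono lam) (k : ℤ) :
    phi2PieceDeriv lam f k (phi2Knot lam (k + 1)) =
      phi2PieceDeriv lam f (k + 1) (phi2Knot lam (k + 1)) := by
  obtain ⟨n, rfl | rfl⟩ := Int.even_or_odd' k
  · rw [phi2Knot_two_mul_add_one, phi2PieceDeriv_two_mul, phi2PieceDeriv_two_mul_add_one,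
      phi2RDeriv_apply_midpoint f hlam, phi2LDeriv_succ_apply_midpoint f hlam]
  · rw [two_mul_add_one_add_one, phi2Knot_two_mul, phi2PieceDeriv_two_mul,
      phi2PieceDeriv_two_mul_add_one, phi2RDeriv_apply_self, phi2LDeriv_apply_self]

theorem strictMono_phi2Knot (hlam : StrictMono lam) : StrictMono (phi2Knot lam) := by
  refine strictMono_int_of_lt_succ fun k => ?_
  obtain ⟨n, rfl | rfl⟩ := Int.even_or_odd' k
  · rw [phi2Knot_two_mul, phi2Knot_two_mul_add_one]
    linarith [hlam (lt_add_one n)]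
  · rw [phi2Knot_two_mul_add_one, two_mul_add_one_add_one, phi2Knot_two_mul]
    linarith [hlam (lt_add_one n)]

theorem exists_mem_Ico_phi2Knot (hlam : GoodSeq lam) (x : ℝ) :
    ∃ k, x ∈ Ico (phi2Knot lam k) (phi2Knot lam (k + 1)) := by
  obtain ⟨n, hn⟩ := exists_mem_Ico_of_tendsto hlam.1.monotone hlam.2.1 hlam.2.2 x
  by_cases hx : x < (lam n + lam (n + 1)) / 2
  · exact ⟨2 * n, by rw [phi2Knot_two_mul, phi2Knot_two_mul_add_one]; exact ⟨hn.1, hx⟩⟩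
  · refine ⟨2 * n + 1, ?_⟩
    rw [phi2Knot_two_mul_add_one, two_mul_add_one_add_one, phi2Knot_two_mul]
    exact ⟨not_lt.1 hx, hn.2⟩

theorem contDiff_one_of_eqOn_phi2 (hlam : GoodSeq lam) {F : ℝ → ℂ}
    (hL : ∀ n x, (lam (n - 1) + lam n) / 2 ≤ x → x ≤ lam n → F x = phi2L lam f n x)
    (hR : ∀ n x, lam n ≤ x → x ≤ (lam n + lam (n + 1)) / 2 → F x = phi2R lam f n x) :
    ContDiff ℝ 1 F ∧
      ∀ n, EqOn (deriv F) (phi2RDeriv lam f n) (Icc (lam n) ((lam n + lam (n + 1)) / 2)) := by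
  have hmono := hlam.1
  have hF : ∀ k, EqOn F (phi2Piece lam f k) (Icc (phi2Knot lam k) (phi2Knot lam (k + 1))) := by
    intro k x hx
    obtain ⟨n, rfl | rfl⟩ := Int.even_or_odd' k
    · rw [phi2Knot_two_mul, phi2Knot_two_mul_add_one] at hx
      rw [phi2Piece_two_mul]
      exact hR n x hx.1 hx.2
    · rw [phi2Knot_two_mul_add_one, two_mul_add_one_add_one, phi2Knot_two_mul] at hx
      rw [phi2Piece_two_mul_add_one]
      exact hL (n + 1) x (by rw [add_sub_cancel_right]; exact hx.1) hx.2
  obtain ⟨hC1, hderiv⟩ := contDiff_one_of_eqOn_Icc_pieces (strictMono_phi2Knot hmono)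
    (exists_mem_Ico_phi2Knot hlam) (hasDerivAt_phi2Piece f hmono) (continuous_phi2PieceDeriv f)
    (phi2PieceDeriv_apply_knot_succ f hmono) hF
  refine ⟨hC1, fun n => ?_⟩
  simpa only [phi2Knot_two_mul, phi2Knot_two_mul_add_one, phi2PieceDeriv_two_mul]
    using hderiv (2 * n)

end Knots

/-- the two piecewise cubic formulas defining `Φ₂ f` agree at the common
endpoints `λ_n` and `μ_n` (so `Φ₂ f` is well defined), the resulting function is `C¹` on `ℝ`,
and for every `n`: `(Φ₂f)(λ_n) = f_n`, `(Φ₂f)'(λ_n) = α_n(f)`,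
`(Φ₂f)(μ_n) = (f_n + f_{n+1})/2`, `(Φ₂f)'(μ_n) = f[λ_n,λ_{n+1}]`. -/
theorem stmt19 (lam : ℤ → ℝ) (hlam : GoodSeq lam) (f : ℤ → ℂ) :
    (∀ n : ℤ, phi2L lam f n (lam n) = phi2R lam f n (lam n)) ∧
    (∀ n : ℤ, phi2R lam f n ((lam n + lam (n + 1)) / 2) =
      phi2L lam f (n + 1) ((lam n + lam (n + 1)) / 2)) ∧
    ∀ F : ℝ → ℂ,
      (∀ n : ℤ, ∀ x : ℝ, (lam (n - 1) + lam n) / 2 ≤ x → x ≤ lam n →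
        F x = phi2L lam f n x) →
      (∀ n : ℤ, ∀ x : ℝ, lam n ≤ x → x ≤ (lam n + lam (n + 1)) / 2 →
        F x = phi2R lam f n x) →
      ContDiff ℝ 1 F ∧
      ∀ n : ℤ,
        F (lam n) = f n ∧
        deriv F (lam n) = alphaN lam f n ∧
        F ((lam n + lam (n + 1)) / 2) = (f n + f (n + 1)) / 2 ∧
        deriv F ((lam n + lam (n + 1)) / 2) = dd1 lam f n := by
  have hmono := hlam.1
  refine ⟨fun n => by rw [phi2L_apply_self, phi2R_apply_self],
    fun n => by rw [phi2R_apply_midpoint f hmono, phi2L_succ_apply_midpoint f hmono],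
    fun F hL hR => ?_⟩
  obtain ⟨hC1, hderiv⟩ := contDiff_one_of_eqOn_phi2 f hlam hL hR
  refine ⟨hC1, fun n => ?_⟩
  have hμ : lam n ≤ (lam n + lam (n + 1)) / 2 := by linarith [hmono (lt_add_one n)]
  refine ⟨?_, ?_, ?_, ?_⟩
  · rw [hR n _ le_rfl hμ, phi2R_apply_self]
  · rw [hderiv n ⟨le_rfl, hμ⟩, phi2RDeriv_apply_self]
  · rw [hR n _ hμ le_rfl, phi2R_apply_midpoint f hmono]
  · rw [hderiv n ⟨hμ, le_rfl⟩, phi2RDeriv_apply_midpoint f hmono]
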